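/- Let n ≥ 2, 0 < a < b, α₁ > 0, α₂ > 0, and let f be continuous on Ā with f ≥ 0 on Ā. Suppose u is C² on Ā, satisfies −Δu(x) = f(x) for every x ∈ A, and satisfies the Robin boundary conditions with parameters α₁, α₂. Then u ≥ 0 on Ā. -/

import Mathlib

/-!
Since `-Δu = f ≥ 0`, the minimum of `u` over the closed shell is attained on one of the two
boundary spheres: at an interior minimum `z` of the perturbation `u - ε ‖x‖²` the Laplacian
would be nonnegative, whereas it equals `Δu(z) - 2nε < 0`. At a boundary minimum `q` the
derivative of `u` in the inward radial direction is nonnegative, so the Robin condition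
`∂_ν u(q) + α u(q) = 0` with `α > 0` forces `u(q) ≥ 0`.
-/

open MeasureTheory Metric Set Real
open scoped InnerProductSpace ENNReal Classical

noncomputable section

abbrev Euc (n : ℕ) := EuclideanSpace ℝ (Fin n)

/-- The Laplacian: sum of second partial derivatives. -/
def lap {n : ℕ} (u : Euc n → ℝ) (x : Euc n) : ℝ :=
  ∑ i : Fin n, fderiv ℝ (fun y => fderiv ℝ u y (EuclideanSpace.single i 1)) x
    (EuclideanSpace.single i 1)

/-- Surface measure on the unit sphere: (n-1)-dimensional Hausdorff measure restricted
to the sphere. -/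
def sphereMeasure (n : ℕ) : Measure (Euc n) :=
  (μH[(n : ℝ) - 1]).restrict (sphere (0 : Euc n) 1)

/-- First standard basis vector. -/
def e₁ (n : ℕ) : Euc n := if h : 0 < n then EuclideanSpace.single (⟨0, h⟩ : Fin n) 1 else 0

/-- Open polar cap of geodesic radius θ centered at e₁. -/
def polarCap (n : ℕ) (θ : ℝ) : Set (Euc n) :=
  {ξ | ξ ∈ sphere (0 : Euc n) 1 ∧ Real.cos θ < ⟪e₁ n, ξ⟫_ℝ}

/-- Decreasing rearrangement of `g` with respect to the measure `μ`. -/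
def decRearr {X : Type*} [MeasurableSpace X] (μ : Measure X) (g : X → ℝ) (t : ℝ) : ℝ :=
  sInf {s : ℝ | μ {x | s < g x} ≤ ENNReal.ofReal t}

/-- Spherical rearrangement of a function on the unit sphere. -/
def sphRearr (n : ℕ) (g : Euc n → ℝ) (ξ : Euc n) : ℝ :=
  decRearr (sphereMeasure n) g
    ((sphereMeasure n (polarCap n (Real.arccos ⟪e₁ n, ξ⟫_ℝ))).toReal)

/-- Cap symmetrization: spherical rearrangement sphere-by-sphere. -/
def capSymm (n : ℕ) (f : Euc n → ℝ) (x : Euc n) : ℝ :=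
  if x = 0 then f 0 else sphRearr n (fun ξ => f (‖x‖ • ξ)) (‖x‖⁻¹ • x)

/-- Open spherical shell. -/
def shell (n : ℕ) (a b : ℝ) : Set (Euc n) := {x | a < ‖x‖ ∧ ‖x‖ < b}

/-- `u` is C² on an open neighborhood of the closure of `A`. -/
def IsC2OnClosure {n : ℕ} (u : Euc n → ℝ) (A : Set (Euc n)) : Prop :=
  ∃ U, IsOpen U ∧ closure A ⊆ U ∧ ContDiffOn ℝ 2 u U

open Filter Topology

/-- If `g''(x₀) < 0`, the second-derivative test makes `x₀` a local maximum too, so `g` is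
locally constant. No differentiability is needed: `deriv` is `0` where it is undefined. -/
theorem IsLocalMin.deriv_deriv_nonneg {g : ℝ → ℝ} {x₀ : ℝ} (h : IsLocalMin g x₀)
    (hc : ContinuousAt g x₀) : 0 ≤ deriv (deriv g) x₀ := by
  by_contra! hneg
  have hmax := isLocalMax_of_deriv_deriv_neg hneg h.deriv_eq_zero hc
  have hconst : g =ᶠ[𝓝 x₀] fun _ => g x₀ := by
    filter_upwards [h, hmax] with y hmin hmax using le_antisymm hmax hmin
  have : deriv (deriv g) x₀ = 0 := by
    simpa using hconst.deriv.deriv_eq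
  exact hneg.ne this

theorem ContDiffAt.differentiableAt_fderiv_apply {n : ℕ} {v : Euc n → ℝ} {x : Euc n}
    (hv : ContDiffAt ℝ 2 v x) (e : Euc n) :
    DifferentiableAt ℝ (fun y => fderiv ℝ v y e) x :=
  ((hv.fderiv_right (m := 1) (by norm_num)).differentiableAt one_ne_zero).clm_apply
    (differentiableAt_const e)

theorem ContDiffAt.deriv_deriv_apply_add_smul {n : ℕ} {v : Euc n → ℝ} {x : Euc n}
    (hv : ContDiffAt ℝ 2 v x) (e : Euc n) :
    deriv (deriv fun t : ℝ => v (x + t • e)) 0 = fderiv ℝ (fun y => fderiv ℝ v y e) x e := by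
  have hline : ∀ t : ℝ, HasDerivAt (fun t : ℝ => x + t • e) e t := fun t => by
    simpa using ((hasDerivAt_id t).smul_const e).const_add x
  have hcont : Tendsto (fun t : ℝ => x + t • e) (𝓝 0) (𝓝 x) := by
    simpa using (hline 0).continuousAt.tendsto
  have hderiv :
      deriv (fun t : ℝ => v (x + t • e)) =ᶠ[𝓝 0] fun t => fderiv ℝ v (x + t • e) e := by
    filter_upwards [hcont.eventually (hv.eventually (by simp))] with t ht
    exact ((ht.differentiableAt (by norm_num)).hasFDerivAt.comp_hasDerivAt t (hline t)).deriv
  rw [hderiv.deriv_eq]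
  have hd := (hv.differentiableAt_fderiv_apply e).hasFDerivAt
  rw [← add_zero x, ← zero_smul ℝ e] at hd
  simpa [Function.comp_def] using (hd.comp_hasDerivAt (0 : ℝ) (hline 0)).deriv

theorem IsLocalMin.lap_nonneg {n : ℕ} {v : Euc n → ℝ} {x : Euc n} (hmin : IsLocalMin v x)
    (hv : ContDiffAt ℝ 2 v x) : 0 ≤ lap v x := by
  refine Finset.sum_nonneg fun i _ => ?_
  set e : Euc n := EuclideanSpace.single i 1
  set line : ℝ → Euc n := fun t => x + t • e
  have hline : ContinuousAt line 0 := by fun_prop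
  have hmin₀ : IsLocalMin v (line 0) := by simpa [line] using hmin
  have hv₀ : ContinuousAt v (line 0) := by simpa [line] using hv.continuousAt
  rw [← hv.deriv_deriv_apply_add_smul e]
  exact (hmin₀.comp_continuous hline).deriv_deriv_nonneg (hv₀.comp hline)

theorem lap_sub {n : ℕ} {u w : Euc n → ℝ} {x : Euc n} (hu : ContDiffAt ℝ 2 u x)
    (hw : ContDiffAt ℝ 2 w x) : lap (fun y => u y - w y) x = lap u x - lap w x := by
  rw [lap, lap, lap, ← Finset.sum_sub_distrib]
  refine Finset.sum_congr rfl fun i _ => ?_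
  set e : Euc n := EuclideanSpace.single i 1
  have hfderiv : (fun y => fderiv ℝ (fun y => u y - w y) y e)
      =ᶠ[𝓝 x] fun y => fderiv ℝ u y e - fderiv ℝ w y e := by
    filter_upwards [hu.eventually (by simp), hw.eventually (by simp)] with y huy hwy
    rw [fderiv_fun_sub (huy.differentiableAt (by norm_num)) (hwy.differentiableAt (by norm_num))]
    rfl
  rw [hfderiv.fderiv_eq, fderiv_fun_sub (hu.differentiableAt_fderiv_apply e)
    (hw.differentiableAt_fderiv_apply e)]
  rfl

theorem lap_const_mul_norm_sq {n : ℕ} (c : ℝ) (x : Euc n) :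
    lap (fun y => c * ‖y‖ ^ 2) x = 2 * n * c := by
  have hfderiv (e : Euc n) :
      (fun y => fderiv ℝ (fun y : Euc n => c * ‖y‖ ^ 2) y e) = ⇑((2 * c) • innerSL ℝ e) := by
    ext y
    rw [((hasStrictFDerivAt_norm_sq y).hasFDerivAt.const_mul c).fderiv]
    simp only [smul_apply, coe_innerSL_apply, real_inner_comm, nsmul_eq_mul, Nat.cast_ofNat,
      smul_eq_mul]
    ring
  simp only [lap, hfderiv, ContinuousLinearMap.fderiv, smul_apply, coe_innerSL_apply,
    inner_self_eq_norm_sq_to_K, PiLp.norm_single, norm_one, ringHom_apply, one_pow, smul_eq_mul,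
    mul_one, Finset.sum_const, Finset.card_univ, Fintype.card_fin, nsmul_eq_mul]
  ring

section WeakMinimumPrinciple

variable {n : ℕ} {K Ω : Set (Euc n)} {u : Euc n → ℝ}

theorem exists_mem_diff_sub_norm_sq_le (hn : 0 < n) (hK : IsCompact K) (hΩ : IsOpen Ω)
    (hΩK : Ω ⊆ K) (hcont : ContinuousOn u K) (hC2 : ∀ z ∈ Ω, ContDiffAt ℝ 2 u z)
    (hlap : ∀ z ∈ Ω, lap u z ≤ 0) {ε : ℝ} (hε : 0 < ε) {x : Euc n} (hx : x ∈ K) :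
    ∃ z ∈ K \ Ω, u z - ε * ‖z‖ ^ 2 ≤ u x - ε * ‖x‖ ^ 2 := by
  obtain ⟨z, hzK, hzmin⟩ := hK.exists_isMinOn (f := fun y => u y - ε * ‖y‖ ^ 2) ⟨x, hx⟩
    (hcont.sub (by fun_prop))
  refine ⟨z, ⟨hzK, fun hzΩ => ?_⟩, hzmin hx⟩
  have hnonneg := (hzmin.isLocalMin (mem_of_superset (hΩ.mem_nhds hzΩ) hΩK)).lap_nonneg
    ((hC2 z hzΩ).sub (contDiffAt_const.mul (contDiff_norm_sq ℝ).contDiffAt))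
  rw [lap_sub (hC2 z hzΩ) (contDiffAt_const.mul (contDiff_norm_sq ℝ).contDiffAt),
    lap_const_mul_norm_sq] at hnonneg
  have : (0 : ℝ) < 2 * n * ε := by positivity
  linarith [hlap z hzΩ]

theorem exists_isMinOn_mem_diff_of_lap_nonpos (hn : 0 < n) (hK : IsCompact K)
    (hKne : K.Nonempty) (hΩ : IsOpen Ω) (hΩK : Ω ⊆ K) (hcont : ContinuousOn u K)
    (hC2 : ∀ z ∈ Ω, ContDiffAt ℝ 2 u z) (hlap : ∀ z ∈ Ω, lap u z ≤ 0) :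
    ∃ q ∈ K \ Ω, IsMinOn u K q := by
  obtain ⟨z₀, hz₀, -⟩ :=
    exists_mem_diff_sub_norm_sq_le hn hK hΩ hΩK hcont hC2 hlap one_pos hKne.some_mem
  obtain ⟨q, hq, hqmin⟩ :=
    (hK.diff hΩ).exists_isMinOn ⟨z₀, hz₀⟩ (hcont.mono sdiff_subset)
  obtain ⟨R, hR, hKR⟩ := hK.isBounded.exists_pos_norm_le
  refine ⟨q, hq, isMinOn_iff.2 fun x hx => le_of_forall_pos_le_add fun δ hδ => ?_⟩
  obtain ⟨z, hz, hzx⟩ :=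
    exists_mem_diff_sub_norm_sq_le hn hK hΩ hΩK hcont hC2 hlap (div_pos hδ (pow_pos hR 2)) hx
  have hzR : δ / R ^ 2 * ‖z‖ ^ 2 ≤ δ := by
    calc δ / R ^ 2 * ‖z‖ ^ 2 ≤ δ / R ^ 2 * R ^ 2 := by
          gcongr; exact hKR z hz.1
      _ = δ := div_mul_cancel₀ δ (pow_pos hR 2).ne'
  have : 0 ≤ δ / R ^ 2 * ‖x‖ ^ 2 := by positivity
  linarith [isMinOn_iff.1 hqmin z hz]

end WeakMinimumPrinciple

section Shell

variable {n : ℕ} {a b : ℝ}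

theorem isOpen_shell : IsOpen (shell n a b) :=
  (isOpen_lt continuous_const continuous_norm).inter (isOpen_lt continuous_norm continuous_const)

theorem isCompact_closure_shell : IsCompact (closure (shell n a b)) :=
  (isBounded_ball.subset fun _ hx => mem_ball_zero_iff.2 hx.2).isCompact_closure

theorem closure_shell (ha : 0 < a) (hab : a < b) :
    closure (shell n a b) = {x | a ≤ ‖x‖ ∧ ‖x‖ ≤ b} := by
  refine subset_antisymm (closure_minimal (fun x hx => ⟨hx.1.le, hx.2.le⟩) ?_) ?_
  · exact (isClosed_le continuous_const continuous_norm).inter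
      (isClosed_le continuous_norm continuous_const)
  rintro x ⟨hax, hxb⟩
  have hx : 0 < ‖x‖ := ha.trans_le hax
  have hone : (1 : ℝ) ∈ closure (Ioo (a / ‖x‖) (b / ‖x‖)) := by
    rw [closure_Ioo (div_lt_div_of_pos_right hab hx).ne]
    exact ⟨div_le_one_of_le₀ hax hx.le, (one_le_div₀ hx).2 hxb⟩
  have hmaps : MapsTo (fun c : ℝ => c • x) (Ioo (a / ‖x‖) (b / ‖x‖)) (shell n a b) := by
    rintro c ⟨hac, hcb⟩
    have hc : 0 < c := (div_pos ha hx).trans hac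
    simp only [shell, mem_ofPred_eq, norm_smul, Real.norm_of_nonneg hc.le]
    exact ⟨(div_lt_iff₀ hx).1 hac, (lt_div_iff₀ hx).1 hcb⟩
  simpa using map_mem_closure (by fun_prop) hone hmaps

theorem segment_subset_closure_shell (ha : 0 < a) (hab : a < b) {q : Euc n}
    (hq : q ∈ closure (shell n a b)) {r : ℝ} (hr : r ∈ Icc a b) :
    segment ℝ q ((r / ‖q‖) • q) ⊆ closure (shell n a b) := by
  rw [closure_shell ha hab] at hq ⊢
  have hq₀ : 0 < ‖q‖ := ha.trans_le hq.1
  rw [segment_eq_image']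
  rintro _ ⟨θ, ⟨hθ₀, hθ₁⟩, rfl⟩
  have hpoint : q + θ • ((r / ‖q‖) • q - q) = (1 - θ + θ * (r / ‖q‖)) • q := by module
  have hcoef : 0 ≤ 1 - θ + θ * (r / ‖q‖) := by
    have : 0 ≤ θ * (r / ‖q‖) := mul_nonneg hθ₀ (div_nonneg (ha.le.trans hr.1) hq₀.le)
    linarith
  have hnorm : ‖q + θ • ((r / ‖q‖) • q - q)‖ = (1 - θ) * ‖q‖ + θ * r := by
    rw [hpoint, norm_smul, Real.norm_of_nonneg hcoef]
    field_simp
  simp only [mem_ofPred_eq, hnorm]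
  constructor <;> nlinarith [hq.1, hq.2, hr.1, hr.2]

end Shell

theorem nonneg_of_isMinOn_closure_shell_of_robin {n : ℕ} {a b α₁ α₂ : ℝ} {u : Euc n → ℝ}
    (ha : 0 < a) (hab : a < b) (hα₁ : 0 < α₁) (hα₂ : 0 < α₂)
    (huRa : ∀ x : Euc n, ‖x‖ = a → fderiv ℝ u x (-(a⁻¹ • x)) + α₁ * u x = 0)
    (huRb : ∀ x : Euc n, ‖x‖ = b → fderiv ℝ u x (b⁻¹ • x) + α₂ * u x = 0) {q : Euc n}
    (hq : q ∈ closure (shell n a b) \ shell n a b) (hmin : IsMinOn u (closure (shell n a b)) q)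
    (hd : DifferentiableAt ℝ u q) : 0 ≤ u q := by
  have hradial (r : ℝ) (hr : r ∈ Icc a b) : 0 ≤ (r / ‖q‖ - 1) * fderiv ℝ u q q := by
    have := hmin.localize.hasFDerivWithinAt_nonneg hd.hasFDerivAt.hasFDerivWithinAt
      (sub_mem_posTangentConeAt_of_segment_subset (segment_subset_closure_shell ha hab hq.1 hr))
    rwa [show (r / ‖q‖) • q - q = (r / ‖q‖ - 1) • q by module, map_smul, smul_eq_mul]
      at this
  obtain ⟨⟨haq, hqb⟩, hq_notMem⟩ := closure_shell ha hab ▸ hq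
  rcases haq.lt_or_eq with haq | haq
  · have hqb : ‖q‖ = b := hqb.eq_of_not_lt fun h => hq_notMem ⟨haq, h⟩
    have hD : fderiv ℝ u q q ≤ 0 := by
      refine nonpos_of_mul_nonneg_right (hradial a ⟨le_rfl, hab.le⟩) ?_
      rw [hqb, sub_neg, div_lt_one (ha.trans hab)]
      exact hab
    have hR := huRb q hqb
    rw [map_smul, smul_eq_mul] at hR
    have : b⁻¹ * fderiv ℝ u q q ≤ 0 :=
      mul_nonpos_of_nonneg_of_nonpos (inv_nonneg.2 (ha.trans hab).le) hD
    exact nonneg_of_mul_nonneg_right (by linarith) hα₂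
  · have hD : 0 ≤ fderiv ℝ u q q := by
      refine nonneg_of_mul_nonneg_right (hradial b ⟨hab.le, le_rfl⟩) ?_
      rw [← haq, sub_pos, one_lt_div ha]
      exact hab
    have hR := huRa q haq.symm
    rw [map_neg, map_smul, smul_eq_mul] at hR
    have : 0 ≤ a⁻¹ * fderiv ℝ u q q := mul_nonneg (inv_nonneg.2 ha.le) hD
    exact nonneg_of_mul_nonneg_right (by linarith) hα₁

theorem robin_shell_nonneg_general {n : ℕ} (hn : 2 ≤ n) {a b : ℝ} (ha : 0 < a) (hab : a < b)
    {α₁ α₂ : ℝ} (hα₁ : 0 < α₁) (hα₂ : 0 < α₂) (f u : Euc n → ℝ)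
    (hfpos : ∀ x ∈ closure (shell n a b), 0 ≤ f x)
    (hu : IsC2OnClosure u (shell n a b))
    (hupde : ∀ x ∈ shell n a b, -lap u x = f x)
    (huRa : ∀ x : Euc n, ‖x‖ = a → fderiv ℝ u x (-(a⁻¹ • x)) + α₁ * u x = 0)
    (huRb : ∀ x : Euc n, ‖x‖ = b → fderiv ℝ u x (b⁻¹ • x) + α₂ * u x = 0) :
    ∀ x ∈ closure (shell n a b), 0 ≤ u x := by
  obtain ⟨U, hU, hclosureU, huU⟩ := hu
  have hC2 (x) (hx : x ∈ closure (shell n a b)) : ContDiffAt ℝ 2 u x :=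
    huU.contDiffAt (hU.mem_nhds (hclosureU hx))
  have hlap (z) (hz : z ∈ shell n a b) : lap u z ≤ 0 := by
    linarith [hupde z hz, hfpos z (subset_closure hz)]
  intro x hx
  obtain ⟨q, hq, hmin⟩ := exists_isMinOn_mem_diff_of_lap_nonpos (by omega)
    isCompact_closure_shell ⟨x, hx⟩ isOpen_shell subset_closure
    (huU.continuousOn.mono hclosureU) (fun z hz => hC2 z (subset_closure hz)) hlap
  have hq₀ : 0 ≤ u q := nonneg_of_isMinOn_closure_shell_of_robin ha hab hα₁ hα₂ huRa huRb hq
    hmin ((hC2 q hq.1).differentiableAt (by norm_num))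
  exact hq₀.trans (hmin hx)

/-- **Minimum principle for Robin problems on shells**: if `f ≥ 0` and the Robin parameters
are positive, the solution is nonnegative on the closed shell. -/
theorem robin_shell_nonneg {n : ℕ} (hn : 2 ≤ n) {a b : ℝ} (ha : 0 < a) (hab : a < b)
    {α₁ α₂ : ℝ} (hα₁ : 0 < α₁) (hα₂ : 0 < α₂) (f u : Euc n → ℝ)
    (hf : ContinuousOn f (closure (shell n a b)))
    (hfpos : ∀ x ∈ closure (shell n a b), 0 ≤ f x)
    (hu : IsC2OnClosure u (shell n a b))
    (hupde : ∀ x ∈ shell n a b, -lap u x = f x)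
    (huRa : ∀ x : Euc n, ‖x‖ = a → fderiv ℝ u x (-(a⁻¹ • x)) + α₁ * u x = 0)
    (huRb : ∀ x : Euc n, ‖x‖ = b → fderiv ℝ u x (b⁻¹ • x) + α₂ * u x = 0) :
    ∀ x ∈ closure (shell n a b), 0 ≤ u x :=
  robin_shell_nonneg_general hn ha hab hα₁ hα₂ f u hfpos hu hupde huRa huRb
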